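/- arXiv:1709.06838 — 2 statements merged into one kernel-verified Lean document; each statement's English description precedes it below -/
import Mathlib

section
/- Variational formula: for q ∈ (1,2] and nonnegative random variables g, h in L^q with E[g] = 1, one has E[g^q] - (E[g])^q ≥ q·E[g(h^{q-1} - (E h)^{q-1})] - (q-1)(E[h^q] - (E h)^q), with equality when h = g. -/
/-!
With `Φ(a, b) = a ^ q - q a b ^ (q - 1) + (q - 1) b ^ q`, the Bregman divergence of `t ↦ t ^ q`,
the inequality is Jensen's inequality `Φ(E g, E h) ≤ E Φ(g, h)` and the equality case is
`Φ(g, g) = 0`. For `1 < q ≤ 2` the function `Φ` is jointly convex on the open quadrant: the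
determinant of its Hessian is nonnegative by the weighted AM-GM inequality
`v ^ (q - 1) u ^ (2 - q) ≤ (q - 1) v + (2 - q) u`. Jensen then follows by integrating the
tangent-plane inequality at `(E g, E h)`; when `E g` or `E h` vanishes, that variable is `0` a.e.
and Jensen for `t ↦ t ^ q` is what remains.
-/

open MeasureTheory Set

noncomputable def rpowBregman (q a b : ℝ) : ℝ := a ^ q - q * (a * b ^ (q - 1)) + (q - 1) * b ^ q

noncomputable def rpowBregmanDeriv (q a b α β : ℝ) : ℝ :=
  q * α * (a ^ (q - 1) - b ^ (q - 1)) + q * (q - 1) * β * (b ^ (q - 1) - a * b ^ (q - 2))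

noncomputable def rpowBregmanDeriv2 (q a b α β : ℝ) : ℝ :=
  q * (q - 1) * (α ^ 2 * a ^ (q - 2) - 2 * α * β * b ^ (q - 2)
    + β ^ 2 * ((q - 1) * b ^ (q - 2) + (2 - q) * a * b ^ (q - 3)))

lemma Real.self_mul_rpow_sub_one {x : ℝ} (hx : x ≠ 0) (y : ℝ) : x * x ^ (y - 1) = x ^ y := by
  rw [Real.rpow_sub_one hx, mul_div_cancel₀ _ hx]

lemma Real.self_mul_rpow_sub_one_of_nonneg {x y : ℝ} (hx : 0 ≤ x) (hy : y ≠ 0) :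
    x * x ^ (y - 1) = x ^ y := by
  rw [← Real.rpow_one_add' hx (by simpa using hy), add_sub_cancel]

section Calculus

variable {q : ℝ} {u v : ℝ → ℝ} {u' v' t : ℝ}

lemma HasDerivAt.rpowBregman (hq : 1 ≤ q) (hu : HasDerivAt u u' t) (hv : HasDerivAt v v' t)
    (hvt : v t ≠ 0) :
    HasDerivAt (fun s => rpowBregman q (u s) (v s)) (rpowBregmanDeriv q (u t) (v t) u' v') t := by
  have hv1 := hv.rpow_const (p := q - 1) (Or.inl hvt)
  rw [show q - 1 - 1 = q - 2 by ring] at hv1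
  unfold _root_.rpowBregman _root_.rpowBregmanDeriv
  exact (((hu.rpow_const (p := q) (Or.inr hq)).sub ((hu.mul hv1).const_mul q)).add
    ((hv.rpow_const (p := q) (Or.inr hq)).const_mul (q - 1))).congr_deriv (by ring)

lemma HasDerivAt.rpowBregmanDeriv (hu : HasDerivAt u u' t) (hv : HasDerivAt v v' t)
    (hut : u t ≠ 0) (hvt : v t ≠ 0) :
    HasDerivAt (fun s => rpowBregmanDeriv q (u s) (v s) u' v')
      (rpowBregmanDeriv2 q (u t) (v t) u' v') t := by
  have hu1 := hu.rpow_const (p := q - 1) (Or.inl hut)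
  have hv1 := hv.rpow_const (p := q - 1) (Or.inl hvt)
  have hv2 := hv.rpow_const (p := q - 2) (Or.inl hvt)
  rw [show q - 1 - 1 = q - 2 by ring] at hu1 hv1
  rw [show q - 2 - 1 = q - 3 by ring] at hv2
  have hv3 : v t * v t ^ (q - 3) = v t ^ (q - 2) := by
    rw [show q - 3 = q - 2 - 1 by ring, Real.self_mul_rpow_sub_one hvt]
  unfold _root_.rpowBregmanDeriv rpowBregmanDeriv2
  exact (((hu1.sub hv1).const_mul (q * u')).add
    ((hv1.sub (hu.mul hv2)).const_mul (q * (q - 1) * v'))).congr_deriv (by rw [← hv3]; ring)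

end Calculus

section Convexity

variable {q : ℝ} (hq1 : 1 < q) (hq2 : q ≤ 2)
include hq1 hq2

lemma sq_rpow_sub_two_le_of_pos {u v : ℝ} (hu : 0 < u) (hv : 0 < v) :
    (v ^ (q - 2)) ^ 2 ≤ u ^ (q - 2) * ((q - 1) * v ^ (q - 2) + (2 - q) * u * v ^ (q - 3)) := by
  have amgm : v ^ (q - 1) * u ^ (2 - q) ≤ (q - 1) * v + (2 - q) * u :=
    Real.geom_mean_le_arith_mean2_weighted (by linarith) (by linarith) hv.le hu.le (by ring)
  have hv2 : v * v ^ (q - 3) = v ^ (q - 2) := by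
    rw [show q - 3 = q - 2 - 1 by ring, Real.self_mul_rpow_sub_one hv.ne']
  have hv1 : v * (v * v ^ (q - 3)) = v ^ (q - 1) := by
    rw [hv2, show q - 2 = q - 1 - 1 by ring, Real.self_mul_rpow_sub_one hv.ne']
  have hu0 : u ^ (2 - q) * u ^ (q - 2) = 1 := by
    rw [← Real.rpow_add hu, sub_add_sub_cancel', sub_self, Real.rpow_zero]
  rw [← hv1] at amgm
  rw [← hv2]
  nlinarith [mul_le_mul_of_nonneg_right amgm (by positivity : 0 ≤ u ^ (q - 2) * v ^ (q - 3))]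

lemma rpowBregmanDeriv2_nonneg {a b : ℝ} (ha : 0 < a) (hb : 0 < b) (α β : ℝ) :
    0 ≤ rpowBregmanDeriv2 q a b α β := by
  have ha_pow : 0 < a ^ (q - 2) := by positivity
  refine mul_nonneg (by nlinarith) (nonneg_of_mul_nonneg_right ?_ ha_pow)
  nlinarith [sq_nonneg (α * a ^ (q - 2) - β * b ^ (q - 2)),
    mul_le_mul_of_nonneg_left (sq_rpow_sub_two_le_of_pos hq1 hq2 ha hb) (sq_nonneg β)]

lemma rpowBregman_add_deriv_le {a₀ b₀ a b : ℝ} (ha₀ : 0 < a₀) (hb₀ : 0 < b₀)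
    (ha : 0 ≤ a) (hb : 0 ≤ b) :
    rpowBregman q a₀ b₀ + rpowBregmanDeriv q a₀ b₀ (a - a₀) (b - b₀) ≤ rpowBregman q a b := by
  set u : ℝ → ℝ := fun t => a₀ + (a - a₀) * t
  set v : ℝ → ℝ := fun t => b₀ + (b - b₀) * t
  have hu : ∀ t, HasDerivAt u (a - a₀) t := fun t =>
    (((hasDerivAt_id t).const_mul (a - a₀)).const_add a₀).congr_deriv (mul_one _)
  have hv : ∀ t, HasDerivAt v (b - b₀) t := fun t =>
    (((hasDerivAt_id t).const_mul (b - b₀)).const_add b₀).congr_deriv (mul_one _)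
  have hpos : ∀ t ∈ Ico (0 : ℝ) 1, 0 < u t ∧ 0 < v t := fun t ⟨ht0, ht1⟩ => by
    constructor <;> nlinarith
  have hF : ∀ t ∈ Ico (0 : ℝ) 1, HasDerivAt (fun s => rpowBregman q (u s) (v s))
      (rpowBregmanDeriv q (u t) (v t) (a - a₀) (b - b₀)) t :=
    fun t ht => (hu t).rpowBregman hq1.le (hv t) (hpos t ht).2.ne'
  have hconvex : ConvexOn ℝ (Icc 0 1) fun s => rpowBregman q (u s) (v s) := by
    refine convexOn_of_hasDerivWithinAt2_nonneg (convex_Icc 0 1)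
      (f' := fun t => rpowBregmanDeriv q (u t) (v t) (a - a₀) (b - b₀))
      (f'' := fun t => rpowBregmanDeriv2 q (u t) (v t) (a - a₀) (b - b₀))
      ?_ (fun t ht => ?_) (fun t ht => ?_) (fun t ht => ?_)
    · unfold rpowBregman
      fun_prop (disch := linarith)
    all_goals
      rw [interior_Icc] at ht
      obtain ⟨hut, hvt⟩ := hpos t (Ioo_subset_Ico_self ht)
    · exact (hF t (Ioo_subset_Ico_self ht)).hasDerivWithinAt
    · exact ((hu t).rpowBregmanDeriv (hv t) hut.ne' hvt.ne').hasDerivWithinAt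
    · exact rpowBregmanDeriv2_nonneg hq1 hq2 hut hvt _ _
  have hslope := hconvex.le_slope_of_hasDerivAt (by simp) (by simp) one_pos (hF 0 (by simp))
  simp only [slope, u, v, vsub_eq_sub, smul_eq_mul, sub_zero, inv_one, one_mul, mul_one,
    mul_zero, add_zero, add_sub_cancel] at hslope
  linarith

end Convexity

lemma rpowBregman_zero_left {q : ℝ} (hq : 0 < q) (b : ℝ) : rpowBregman q 0 b = (q - 1) * b ^ q := by
  simp [rpowBregman, Real.zero_rpow hq.ne']

lemma rpowBregman_zero_right {q : ℝ} (hq : 1 < q) (a : ℝ) : rpowBregman q a 0 = a ^ q := by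
  simp [rpowBregman, Real.zero_rpow (sub_ne_zero.2 hq.ne'), Real.zero_rpow (by linarith : q ≠ 0)]

section Integral

variable {Ω : Type*} [MeasurableSpace Ω] {μ : Measure Ω} {q : ℝ} {g h : Ω → ℝ}

lemma integral_mul_sub_const (hg : Integrable g μ) (hgh : Integrable (fun x => g x * h x) μ)
    (c : ℝ) : ∫ x, g x * (h x - c) ∂μ = ∫ x, g x * h x ∂μ - (∫ x, g x ∂μ) * c := by
  simp_rw [mul_sub]
  rw [integral_sub hgh (hg.mul_const c), integral_mul_const]

variable (hgq : Integrable (fun x => g x ^ q) μ) (hhq : Integrable (fun x => h x ^ q) μ)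
  (hgh : Integrable (fun x => g x * h x ^ (q - 1)) μ)
include hgq hhq hgh

lemma integrable_rpowBregman : Integrable (fun x => rpowBregman q (g x) (h x)) μ :=
  (hgq.sub (hgh.const_mul q)).add (hhq.const_mul (q - 1))

lemma integral_rpowBregman :
    ∫ x, rpowBregman q (g x) (h x) ∂μ
      = ∫ x, g x ^ q ∂μ - q * ∫ x, g x * h x ^ (q - 1) ∂μ + (q - 1) * ∫ x, h x ^ q ∂μ := by
  unfold rpowBregman
  rw [integral_add (hgq.sub' (hgh.const_mul q)) (hhq.const_mul (q - 1)),
    integral_sub hgq (hgh.const_mul q), integral_const_mul, integral_const_mul]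

end Integral

section Jensen

variable {Ω : Type*} [MeasurableSpace Ω] {μ : Measure Ω} [IsProbabilityMeasure μ] {q : ℝ}

lemma rpow_integral_le_integral_rpow (hq : 1 ≤ q) {f : Ω → ℝ} (hf0 : ∀ x, 0 ≤ f x)
    (hf : Integrable f μ) (hfq : Integrable (fun x => f x ^ q) μ) :
    (∫ x, f x ∂μ) ^ q ≤ ∫ x, f x ^ q ∂μ :=
  (convexOn_rpow hq).map_integral_le (by fun_prop (disch := linarith)) isClosed_Ici
    (ae_of_all _ hf0) hf hfq

theorem rpowBregman_integral_le_integral (hq1 : 1 < q) (hq2 : q ≤ 2) {g h : Ω → ℝ}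
    (hg0 : ∀ x, 0 ≤ g x) (hh0 : ∀ x, 0 ≤ h x)
    (hgq : Integrable (fun x => g x ^ q) μ) (hg1 : Integrable g μ)
    (hhq : Integrable (fun x => h x ^ q) μ) (hh1 : Integrable h μ)
    (hgh : Integrable (fun x => g x * h x ^ (q - 1)) μ) :
    rpowBregman q (∫ x, g x ∂μ) (∫ x, h x ∂μ) ≤ ∫ x, rpowBregman q (g x) (h x) ∂μ := by
  obtain hm | hm := (integral_nonneg (μ := μ) (f := h) hh0).eq_or_lt
  · have hh : h =ᵐ[μ] 0 := (integral_eq_zero_iff_of_nonneg hh0 hh1).1 hm.symm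
    calc rpowBregman q (∫ x, g x ∂μ) (∫ x, h x ∂μ) = (∫ x, g x ∂μ) ^ q := by
          rw [← hm, rpowBregman_zero_right hq1]
      _ ≤ ∫ x, g x ^ q ∂μ := rpow_integral_le_integral_rpow hq1.le hg0 hg1 hgq
      _ = ∫ x, rpowBregman q (g x) (h x) ∂μ := integral_congr_ae <| hh.mono fun x hx => by
          simp only [show h x = 0 from hx, rpowBregman_zero_right hq1]
  obtain hG | hG := (integral_nonneg (μ := μ) (f := g) hg0).eq_or_lt
  · have hg : g =ᵐ[μ] 0 := (integral_eq_zero_iff_of_nonneg hg0 hg1).1 hG.symm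
    calc rpowBregman q (∫ x, g x ∂μ) (∫ x, h x ∂μ) = (q - 1) * (∫ x, h x ∂μ) ^ q := by
          rw [← hG, rpowBregman_zero_left (by linarith)]
      _ ≤ (q - 1) * ∫ x, h x ^ q ∂μ := by
          gcongr
          exact rpow_integral_le_integral_rpow hq1.le hh0 hh1 hhq
      _ = ∫ x, rpowBregman q (g x) (h x) ∂μ := by
          rw [← integral_const_mul]
          exact integral_congr_ae <| hg.mono fun x hx => by
            simp only [show g x = 0 from hx, rpowBregman_zero_left (by linarith : 0 < q)]
  set G := ∫ x, g x ∂μ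
  set m := ∫ x, h x ∂μ
  have hgG : Integrable (fun x => q * (g x - G) * (G ^ (q - 1) - m ^ (q - 1))) μ :=
    ((hg1.sub (integrable_const G)).const_mul q).mul_const _
  have hhm : Integrable (fun x => q * (q - 1) * (h x - m) * (m ^ (q - 1) - G * m ^ (q - 2))) μ :=
    ((hh1.sub (integrable_const m)).const_mul _).mul_const _
  have htangent : ∫ x, (rpowBregman q G m + rpowBregmanDeriv q G m (g x - G) (h x - m)) ∂μ
      = rpowBregman q G m := by
    unfold rpowBregmanDeriv
    rw [integral_add (integrable_const _) (hgG.fun_add hhm), integral_add hgG hhm,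
      integral_mul_const, integral_mul_const, integral_const_mul, integral_const_mul,
      integral_sub hg1 (integrable_const _), integral_sub hh1 (integrable_const _)]
    simp [G, m]
  calc rpowBregman q G m
      = ∫ x, (rpowBregman q G m + rpowBregmanDeriv q G m (g x - G) (h x - m)) ∂μ := htangent.symm
    _ ≤ ∫ x, rpowBregman q (g x) (h x) ∂μ :=
      integral_mono ((integrable_const _).fun_add (hgG.fun_add hhm))
        (integrable_rpowBregman hgq hhq hgh) fun x => rpowBregman_add_deriv_le hq1 hq2 hG hm (hg0 x) (hh0 x)

end Jensen

theorem stmt_5_general {Ω : Type*} [MeasurableSpace Ω] (μ : Measure Ω) [IsProbabilityMeasure μ]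
    (q : ℝ) (hq1 : 1 < q) (hq2 : q ≤ 2)
    (g h : Ω → ℝ) (hg0 : ∀ x, 0 ≤ g x) (hh0 : ∀ x, 0 ≤ h x)
    (hgq : Integrable (fun x => g x ^ q) μ) (hg1 : Integrable g μ)
    (hhq : Integrable (fun x => h x ^ q) μ) (hh1 : Integrable h μ)
    (hgh : Integrable (fun x => g x * h x ^ (q - 1)) μ) :
    (q * ∫ x, g x * (h x ^ (q - 1) - (∫ y, h y ∂μ) ^ (q - 1)) ∂μ
        - (q - 1) * (∫ x, h x ^ q ∂μ - (∫ x, h x ∂μ) ^ q)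
      ≤ ∫ x, g x ^ q ∂μ - (∫ x, g x ∂μ) ^ q)
    ∧ (q * ∫ x, g x * (g x ^ (q - 1) - (∫ y, g y ∂μ) ^ (q - 1)) ∂μ
        - (q - 1) * (∫ x, g x ^ q ∂μ - (∫ x, g x ∂μ) ^ q)
      = ∫ x, g x ^ q ∂μ - (∫ x, g x ∂μ) ^ q) := by
  constructor
  · have jensen := rpowBregman_integral_le_integral hq1 hq2 hg0 hh0 hgq hg1 hhq hh1 hgh
    rw [integral_rpowBregman hgq hhq hgh, rpowBregman] at jensen
    rw [integral_mul_sub_const hg1 hgh]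
    linarith
  · have self_mul : ∀ {a : ℝ}, 0 ≤ a → a * a ^ (q - 1) = a ^ q := fun ha =>
      Real.self_mul_rpow_sub_one_of_nonneg ha (by linarith)
    have hgg : (fun x => g x * g x ^ (q - 1)) = fun x => g x ^ q := funext fun x => self_mul (hg0 x)
    rw [integral_mul_sub_const hg1 (hgg ▸ hgq), hgg, self_mul (integral_nonneg hg0)]
    ring

theorem stmt_5 {Ω : Type*} [MeasurableSpace Ω] (μ : Measure Ω) [IsProbabilityMeasure μ]
    (q : ℝ) (hq1 : 1 < q) (hq2 : q ≤ 2)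
    (g h : Ω → ℝ) (hg0 : ∀ x, 0 ≤ g x) (hh0 : ∀ x, 0 ≤ h x)
    (hgq : Integrable (fun x => g x ^ q) μ) (hg1 : Integrable g μ)
    (hhq : Integrable (fun x => h x ^ q) μ) (hh1 : Integrable h μ)
    (hgh : Integrable (fun x => g x * h x ^ (q - 1)) μ)
    (hmean : ∫ x, g x ∂μ = 1) :
    (q * ∫ x, g x * (h x ^ (q - 1) - (∫ y, h y ∂μ) ^ (q - 1)) ∂μ
        - (q - 1) * (∫ x, h x ^ q ∂μ - (∫ x, h x ∂μ) ^ q)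
      ≤ ∫ x, g x ^ q ∂μ - (∫ x, g x ∂μ) ^ q)
    ∧ (q * ∫ x, g x * (g x ^ (q - 1) - (∫ y, g y ∂μ) ^ (q - 1)) ∂μ
        - (q - 1) * (∫ x, g x ^ q ∂μ - (∫ x, g x ∂μ) ^ q)
      = ∫ x, g x ^ q ∂μ - (∫ x, g x ∂μ) ^ q) :=
  stmt_5_general μ q hq1 hq2 g h hg0 hh0 hgq hg1 hhq hh1 hgh
end

section
/- Efron–Stein inequality: if X_1,...,X_n are independent random variables and f(X) ∈ L^2, then Var(f(X)) ≤ E[ Σ_{i=1}^n Var_i f(X) ], where Var_i denotes the variance taken with respect to X_i only (conditionally on the other coordinates). -/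
/-!
Write `E i f x = ∫ f (update x i y) dμᵢ(y)` (`marginalAt μ i f`). Each `E i` is an orthogonal
projection of `L²(Π μᵢ)`, so `‖f - E i f‖² = ‖f‖² - ‖E i f‖²`, and by Fubini any two of them
commute almost everywhere. Integrating out the coordinates one at a time (`marginalList`) gives
`f = Q₀ f, Q₁ f, …, Qₙ f = 𝔼 f`, and the variance telescopes into `∑ₖ ‖Qₖ f - E k (Qₖ f)‖²`.
Since `Qₖ f - E k (Qₖ f) = Qₖ (f - E k f)` a.e. and `Qₖ` is an `L²`-contraction, the `k`-th term
is at most `‖f - E k f‖² = 𝔼[Varₖ f]`.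
-/

open MeasureTheory Function Set

theorem sq_integral_le_integral_sq {α : Type*} [MeasurableSpace α] {ν : Measure α}
    [IsProbabilityMeasure ν] {h : α → ℝ} (hh : MemLp h 2 ν) :
    (∫ x, h x ∂ν) ^ 2 ≤ ∫ x, h x ^ 2 ∂ν := by
  have hvar := ProbabilityTheory.variance_nonneg h ν
  rw [ProbabilityTheory.variance_eq_sub hh] at hvar
  simpa using hvar

section
variable {ι : Type*} [DecidableEq ι] {Ω : ι → Type*} [∀ i, MeasurableSpace (Ω i)]
  (μ : ∀ i, Measure (Ω i)) {f : (∀ j, Ω j) → ℝ}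

noncomputable def marginalAt (i : ι) (f : (∀ j, Ω j) → ℝ) (x : ∀ j, Ω j) : ℝ :=
  ∫ y, f (update x i y) ∂μ i

noncomputable def varAt (i : ι) (f : (∀ j, Ω j) → ℝ) (x : ∀ j, Ω j) : ℝ :=
  ∫ y, (f (update x i y) - marginalAt μ i f x) ^ 2 ∂μ i

noncomputable def marginalList (l : List ι) (f : (∀ j, Ω j) → ℝ) : (∀ j, Ω j) → ℝ :=
  l.foldr (marginalAt μ) f

theorem marginalAt_update (i : ι) (f : (∀ j, Ω j) → ℝ) (x : ∀ j, Ω j) (y : Ω i) :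
    marginalAt μ i f (update x i y) = marginalAt μ i f x := by
  simp [marginalAt]

theorem varAt_eq_marginalAt (i : ι) (f : (∀ j, Ω j) → ℝ) :
    varAt μ i f = marginalAt μ i (fun x => (f x - marginalAt μ i f x) ^ 2) := by
  ext x
  show _ = ∫ y, (f (update x i y) - marginalAt μ i f (update x i y)) ^ 2 ∂μ i
  simp only [varAt, marginalAt_update]

variable {μ} in
theorem dependsOn_marginalAt {s : Set ι} (hf : DependsOn f s) (i : ι) :
    DependsOn (marginalAt μ i f) (s \ {i}) := by
  intro x x' hxx'
  refine integral_congr_ae (ae_of_all _ fun y => hf fun j hj => ?_)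
  rcases eq_or_ne j i with rfl | hji
  · simp
  · simpa [hji] using hxx' j ⟨hj, hji⟩

variable {μ} in
theorem dependsOn_marginalList (l : List ι) (f : (∀ j, Ω j) → ℝ) :
    DependsOn (marginalList μ l f) (↑l.toFinset)ᶜ := by
  induction l with
  | nil => simpa [marginalList] using dependsOn_univ f
  | cons i l ih =>
    refine (dependsOn_marginalAt ih i).mono fun j hj => ?_
    simp_all

end

section
variable {ι : Type*} [Fintype ι] [DecidableEq ι] {Ω : ι → Type*} [∀ i, MeasurableSpace (Ω i)]
  {μ : ∀ i, Measure (Ω i)} [∀ i, IsProbabilityMeasure (μ i)]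

variable (μ) in
theorem measurePreserving_update (i : ι) :
    MeasurePreserving (fun p : (∀ j, Ω j) × Ω i => update p.1 i p.2)
      ((Measure.pi μ).prod (μ i)) (Measure.pi μ) := by
  refine ⟨by fun_prop, (Measure.pi_eq fun s hs => ?_).symm⟩
  have hpre : (fun p : (∀ j, Ω j) × Ω i => update p.1 i p.2) ⁻¹' univ.pi s
      = univ.pi (update s i univ) ×ˢ s i := by
    ext ⟨x, y⟩
    simp only [mem_preimage, mem_prod, mem_univ_pi]
    constructor
    · intro h
      refine ⟨fun j => ?_, by simpa using h i⟩
      rcases eq_or_ne j i with rfl | hj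
      · simp
      · simpa [hj] using h j
    · rintro ⟨hx, hy⟩ j
      rcases eq_or_ne j i with rfl | hj
      · simpa using hy
      · simpa [hj] using hx j
  rw [Measure.map_apply (by fun_prop) (.univ_pi hs), hpre, Measure.prod_prod, Measure.pi_pi,
    ← Finset.mul_prod_erase _ _ (Finset.mem_univ i),
    ← Finset.mul_prod_erase _ _ (Finset.mem_univ i)]
  rw [Finset.prod_congr rfl fun j hj => by rw [update_of_ne (Finset.ne_of_mem_erase hj)]]
  simp [mul_comm]

variable {i : ι} {f g : (∀ j, Ω j) → ℝ}

theorem MeasureTheory.Integrable.comp_update (hf : Integrable f (Measure.pi μ)) (i : ι) :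
    Integrable (fun p : (∀ j, Ω j) × Ω i => f (update p.1 i p.2)) ((Measure.pi μ).prod (μ i)) :=
  (measurePreserving_update μ i).integrable_comp_of_integrable hf

theorem measurable_marginalAt (hf : Measurable f) : Measurable (marginalAt μ i f) :=
  (hf.comp (measurePreserving_update μ i).measurable).stronglyMeasurable
    |>.integral_prod_right'.measurable

theorem integrable_marginalAt (hf : Integrable f (Measure.pi μ)) :
    Integrable (marginalAt μ i f) (Measure.pi μ) :=
  (hf.comp_update i).integral_prod_left

theorem integral_marginalAt (hf : Integrable f (Measure.pi μ)) :
    ∫ x, marginalAt μ i f x ∂Measure.pi μ = ∫ x, f x ∂Measure.pi μ := by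
  have hU := measurePreserving_update μ i
  calc ∫ x, marginalAt μ i f x ∂Measure.pi μ
      = ∫ p, f (update p.1 i p.2) ∂(Measure.pi μ).prod (μ i) :=
        (integral_prod _ (hf.comp_update i)).symm
    _ = ∫ x, f x ∂Measure.map _ ((Measure.pi μ).prod (μ i)) :=
        (integral_map hU.aemeasurable (by rw [hU.map_eq]; exact hf.aestronglyMeasurable)).symm
    _ = ∫ x, f x ∂Measure.pi μ := by rw [hU.map_eq]

theorem sq_marginalAt_le (hf : Measurable f) (hf2 : MemLp f 2 (Measure.pi μ)) :
    ∀ᵐ x ∂Measure.pi μ, marginalAt μ i f x ^ 2 ≤ marginalAt μ i (fun x => f x ^ 2) x := by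
  filter_upwards [(hf2.integrable_sq.comp_update i).prod_right_ae] with x hx
  exact sq_integral_le_integral_sq <| (memLp_two_iff_integrable_sq (f := fun y => f (update x i y))
    (hf.comp (measurable_update x)).aestronglyMeasurable).2 hx

theorem memLp_marginalAt (hf : Measurable f) (hf2 : MemLp f 2 (Measure.pi μ)) :
    MemLp (marginalAt μ i f) 2 (Measure.pi μ) := by
  refine (memLp_two_iff_integrable_sq (measurable_marginalAt hf).aestronglyMeasurable).2 <|
    (integrable_marginalAt (i := i) hf2.integrable_sq).mono'
      ((measurable_marginalAt hf).pow_const 2).aestronglyMeasurable ?_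
  filter_upwards [sq_marginalAt_le hf hf2] with x hx
  rwa [Real.norm_eq_abs, abs_of_nonneg (sq_nonneg _)]

theorem integral_sq_marginalAt_le (hf : Measurable f) (hf2 : MemLp f 2 (Measure.pi μ)) :
    ∫ x, marginalAt μ i f x ^ 2 ∂Measure.pi μ ≤ ∫ x, f x ^ 2 ∂Measure.pi μ := by
  rw [← integral_marginalAt (i := i) hf2.integrable_sq]
  exact integral_mono_ae (memLp_marginalAt hf hf2).integrable_sq
    (integrable_marginalAt hf2.integrable_sq) (sq_marginalAt_le hf hf2)

theorem integral_mul_marginalAt (hf : Measurable f) (hf2 : MemLp f 2 (Measure.pi μ)) :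
    ∫ x, f x * marginalAt μ i f x ∂Measure.pi μ = ∫ x, marginalAt μ i f x ^ 2 ∂Measure.pi μ := by
  have hmul : Integrable (fun x => f x * marginalAt μ i f x) (Measure.pi μ) :=
    hf2.integrable_mul (memLp_marginalAt hf hf2)
  rw [← integral_marginalAt (i := i) hmul]
  congr 1 with x
  show ∫ y, f (update x i y) * marginalAt μ i f (update x i y) ∂μ i = _
  simp only [marginalAt_update, integral_mul_const, sq]
  rfl

theorem integral_sq_sub_marginalAt (hf : Measurable f) (hf2 : MemLp f 2 (Measure.pi μ)) :
    ∫ x, (f x - marginalAt μ i f x) ^ 2 ∂Measure.pi μ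
      = ∫ x, f x ^ 2 ∂Measure.pi μ - ∫ x, marginalAt μ i f x ^ 2 ∂Measure.pi μ := by
  have hE := memLp_marginalAt (i := i) hf hf2
  have hmul : Integrable (fun x => f x * marginalAt μ i f x) (Measure.pi μ) :=
    hf2.integrable_mul hE
  have hfirst : Integrable (fun x => f x ^ 2 - 2 * (f x * marginalAt μ i f x)) (Measure.pi μ) :=
    hf2.integrable_sq.sub (hmul.const_mul 2)
  have hexpand : ∀ x, (f x - marginalAt μ i f x) ^ 2
      = f x ^ 2 - 2 * (f x * marginalAt μ i f x) + marginalAt μ i f x ^ 2 := fun x => by ring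
  simp_rw [hexpand]
  rw [integral_add hfirst hE.integrable_sq, integral_sub hf2.integrable_sq (hmul.const_mul 2),
    integral_const_mul, integral_mul_marginalAt hf hf2]
  ring

theorem integrable_varAt (hf : Measurable f) (hf2 : MemLp f 2 (Measure.pi μ)) :
    Integrable (varAt μ i f) (Measure.pi μ) := by
  rw [varAt_eq_marginalAt]
  exact integrable_marginalAt (hf2.sub (memLp_marginalAt hf hf2)).integrable_sq

theorem integral_varAt (hf : Measurable f) (hf2 : MemLp f 2 (Measure.pi μ)) :
    ∫ x, varAt μ i f x ∂Measure.pi μ = ∫ x, (f x - marginalAt μ i f x) ^ 2 ∂Measure.pi μ := by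
  rw [varAt_eq_marginalAt]
  exact integral_marginalAt (hf2.sub (memLp_marginalAt hf hf2)).integrable_sq

theorem marginalAt_sub (hf : Integrable f (Measure.pi μ)) (hg : Integrable g (Measure.pi μ)) :
    marginalAt μ i (f - g) =ᵐ[Measure.pi μ] marginalAt μ i f - marginalAt μ i g := by
  filter_upwards [(hf.comp_update i).prod_right_ae, (hg.comp_update i).prod_right_ae]
    with x hfx hgx
  exact integral_sub hfx hgx

theorem marginalAt_comm {j : ι} (hij : i ≠ j) (hf : Integrable f (Measure.pi μ)) :
    marginalAt μ i (marginalAt μ j f) =ᵐ[Measure.pi μ] marginalAt μ j (marginalAt μ i f) := by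
  have hV : MeasurePreserving
      (fun p : (∀ k, Ω k) × (Ω i × Ω j) => update (update p.1 i p.2.1) j p.2.2)
      ((Measure.pi μ).prod ((μ i).prod (μ j))) (Measure.pi μ) :=
    (measurePreserving_update μ j).comp <| ((measurePreserving_update μ i).prod
      (MeasurePreserving.id (μ j))).comp (measurePreserving_prodAssoc _ _ _).symm
  filter_upwards [(hV.integrable_comp_of_integrable hf).prod_right_ae] with x hx
  simp only [marginalAt]
  rw [integral_integral_swap hx]
  simp_rw [update_comm hij]

theorem integral_sq_sub_marginalAt_marginalAt_le {j : ι} (hij : i ≠ j) (hf : Measurable f)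
    (hf2 : MemLp f 2 (Measure.pi μ)) :
    ∫ x, (marginalAt μ j f x - marginalAt μ i (marginalAt μ j f) x) ^ 2 ∂Measure.pi μ
      ≤ ∫ x, (f x - marginalAt μ i f x) ^ 2 ∂Measure.pi μ := by
  have hEi := memLp_marginalAt (i := i) hf hf2
  have hcomm : marginalAt μ j f - marginalAt μ i (marginalAt μ j f)
      =ᵐ[Measure.pi μ] marginalAt μ j (f - marginalAt μ i f) := by
    filter_upwards [marginalAt_comm hij (hf2.integrable one_le_two),
      marginalAt_sub (i := j) (hf2.integrable one_le_two) (hEi.integrable one_le_two)]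
      with x hx hsub
    simp only [Pi.sub_apply, hx, hsub]
  calc ∫ x, (marginalAt μ j f x - marginalAt μ i (marginalAt μ j f) x) ^ 2 ∂Measure.pi μ
      = ∫ x, marginalAt μ j (f - marginalAt μ i f) x ^ 2 ∂Measure.pi μ :=
        integral_congr_ae (hcomm.fun_comp (· ^ 2))
    _ ≤ ∫ x, (f x - marginalAt μ i f x) ^ 2 ∂Measure.pi μ :=
        integral_sq_marginalAt_le (hf.sub (measurable_marginalAt hf)) (hf2.sub hEi)

theorem measurable_marginalList (l : List ι) (hf : Measurable f) :
    Measurable (marginalList μ l f) := by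
  induction l with
  | nil => exact hf
  | cons i l ih => exact measurable_marginalAt ih

theorem memLp_marginalList (l : List ι) (hf : Measurable f) (hf2 : MemLp f 2 (Measure.pi μ)) :
    MemLp (marginalList μ l f) 2 (Measure.pi μ) := by
  induction l with
  | nil => exact hf2
  | cons i l ih => exact memLp_marginalAt (measurable_marginalList l hf) ih

theorem integrable_marginalList (l : List ι) (hf : Integrable f (Measure.pi μ)) :
    Integrable (marginalList μ l f) (Measure.pi μ) := by
  induction l with
  | nil => exact hf
  | cons i l ih => exact integrable_marginalAt ih

theorem integral_marginalList (l : List ι) (hf : Integrable f (Measure.pi μ)) :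
    ∫ x, marginalList μ l f x ∂Measure.pi μ = ∫ x, f x ∂Measure.pi μ := by
  induction l with
  | nil => rfl
  | cons i l ih => exact (integral_marginalAt (integrable_marginalList l hf)).trans ih

theorem integral_sq_sub_marginalAt_marginalList_le {l : List ι} (hi : i ∉ l) (hf : Measurable f)
    (hf2 : MemLp f 2 (Measure.pi μ)) :
    ∫ x, (marginalList μ l f x - marginalAt μ i (marginalList μ l f) x) ^ 2 ∂Measure.pi μ
      ≤ ∫ x, (f x - marginalAt μ i f x) ^ 2 ∂Measure.pi μ := by
  induction l with
  | nil => rfl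
  | cons j l ih =>
    rw [List.mem_cons, not_or] at hi
    exact (integral_sq_sub_marginalAt_marginalAt_le hi.1 (measurable_marginalList l hf)
      (memLp_marginalList l hf hf2)).trans (ih hi.2)

theorem integral_sq_sub_integral_sq_marginalList_le {l : List ι} (hl : l.Nodup)
    (hf : Measurable f) (hf2 : MemLp f 2 (Measure.pi μ)) :
    ∫ x, f x ^ 2 ∂Measure.pi μ - ∫ x, marginalList μ l f x ^ 2 ∂Measure.pi μ
      ≤ (l.map fun i => ∫ x, (f x - marginalAt μ i f x) ^ 2 ∂Measure.pi μ).sum := by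
  induction l with
  | nil => simp [marginalList]
  | cons i l ih =>
    rw [List.nodup_cons] at hl
    have hstep := integral_sq_sub_marginalAt (i := i) (measurable_marginalList l hf)
      (memLp_marginalList l hf hf2)
    have hlast := integral_sq_sub_marginalAt_marginalList_le hl.1 hf hf2
    simp only [List.map_cons, List.sum_cons]
    change _ - ∫ x, marginalAt μ i (marginalList μ l f) x ^ 2 ∂Measure.pi μ ≤ _
    linarith [ih hl.2]

theorem marginalList_univ_toList (hf : Integrable f (Measure.pi μ)) :
    marginalList μ Finset.univ.toList f = fun _ => ∫ x, f x ∂Measure.pi μ := by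
  have hconst : DependsOn (marginalList μ Finset.univ.toList f) ∅ := by
    simpa using dependsOn_marginalList (μ := μ) Finset.univ.toList f
  obtain ⟨x₀⟩ := nonempty_of_isProbabilityMeasure (Measure.pi μ)
  ext x
  rw [← integral_marginalList Finset.univ.toList hf, hconst.empty x x₀]
  simp [hconst.empty _ x₀]

theorem variance_le_integral_sum_varAt (hf : Measurable f) (hf2 : MemLp f 2 (Measure.pi μ)) :
    ProbabilityTheory.variance f (Measure.pi μ) ≤ ∫ x, ∑ i, varAt μ i f x ∂Measure.pi μ := by
  have hES := integral_sq_sub_integral_sq_marginalList_le (μ := μ)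
    (Finset.nodup_toList Finset.univ) hf hf2
  rw [marginalList_univ_toList (hf2.integrable one_le_two), Finset.sum_map_toList] at hES
  rw [ProbabilityTheory.variance_eq_sub hf2,
    integral_finsetSum _ fun i _ => integrable_varAt hf hf2]
  simp_rw [integral_varAt hf hf2]
  simpa using hES

end

theorem stmt_7 (n : ℕ) {Ω : Fin n → Type*} [∀ i, MeasurableSpace (Ω i)]
    (μ : ∀ i, Measure (Ω i)) [∀ i, IsProbabilityMeasure (μ i)]
    (f : (∀ i, Ω i) → ℝ) (hf : Measurable f) (hf2 : MemLp f 2 (Measure.pi μ)) :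
    ∫ x, f x ^ 2 ∂Measure.pi μ - (∫ x, f x ∂Measure.pi μ) ^ 2
      ≤ ∫ x, ∑ i, ∫ y, (f (Function.update x i y)
          - ∫ z, f (Function.update x i z) ∂μ i) ^ 2 ∂μ i ∂Measure.pi μ :=
  (ProbabilityTheory.variance_eq_sub hf2).symm.trans_le
    (variance_le_integral_sum_varAt hf hf2)
end
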